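/- For every ζ ∈ ℂ with |ζ| = 1, the sequence defined by θ_0 := 0 and θ_{k+1} := a_{−1}(ζ) + a_0(ζ)θ_k + a_1(ζ)θ_k² converges to a limit θ which is a solution of minimum modulus of the quadratic equation: θ satisfies a_1(ζ)θ² + (a_0(ζ)−1)θ + a_{−1}(ζ) = 0, and every μ ∈ ℂ with a_1(ζ)μ² + (a_0(ζ)−1)μ + a_{−1}(ζ) = 0 satisfies |θ| ≤ |μ|. -/

import Mathlib

open Filter Topology

/- Convention: the transition probabilities a_{i,j} (i,j ∈ {−1,0,1}) are encoded
as `v : Fin 3 → Fin 3 → ℝ`, where the index `0, 1, 2` corresponds to `−1, 0, 1`. -/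

/-- `symb v i z = a_i(z) = a_{i,−1} z⁻¹ + a_{i,0} + a_{i,1} z`. -/
noncomputable def symb (v : Fin 3 → Fin 3 → ℝ) (i : Fin 3) (z : ℂ) : ℂ :=
  (v i 0 : ℂ) * z⁻¹ + (v i 1 : ℂ) + (v i 2 : ℂ) * z

/-- `symbOne v i = a_i(1) = a_{i,−1} + a_{i,0} + a_{i,1}` (as a real number). -/
def symbOne (v : Fin 3 → Fin 3 → ℝ) (i : Fin 3) : ℝ := v i 0 + v i 1 + v i 2

/-- The fixed-point iteration θ_0 = 0, θ_{k+1} = a_{−1}(ζ) + a_0(ζ) θ_k + a_1(ζ) θ_k². -/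
noncomputable def quadIter (am1 a0 a1 : ℂ) : ℕ → ℂ
  | 0 => 0
  | k + 1 => am1 + a0 * quadIter am1 a0 a1 k + a1 * (quadIter am1 a0 a1 k) ^ 2

/-!
The iterates `z_n` are dominated by the real iteration `t_{n+1} = ‖A‖ + ‖B‖ t_n + ‖C‖ t_n²`:
`‖z_n‖ ≤ t_n` and `‖z_{n+1} - z_n‖ ≤ t_{n+1} - t_n`, because `z² - w² = (z - w)(z + w)`. When
`‖A‖ + ‖B‖ + ‖C‖ ≤ 1`, `t_n` increases to the least nonnegative fixed point `s ≤ 1` of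
`r ↦ ‖A‖ + ‖B‖ r + ‖C‖ r²`, so `(z_n)` is Cauchy and its limit `θ` is a root with `‖θ‖ ≤ s`. For
another root `μ ≠ θ`, Vieta gives `‖C‖ ‖θ‖ ‖μ‖ = ‖A‖`, while `s` is the smaller root of the real
equation, so `‖C‖ s² ≤ ‖A‖`; hence `‖θ‖² ≤ ‖θ‖ ‖μ‖`.
-/

def quadMap {R : Type*} [CommSemiring R] (a b c x : R) : R := a + b * x + c * x ^ 2

theorem continuous_quadMap {R : Type*} [CommSemiring R] [TopologicalSpace R]
    [IsTopologicalSemiring R] (a b c : R) : Continuous (quadMap a b c) := by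
  unfold quadMap; fun_prop

section CommRing

variable {R : Type*} [CommRing R]

theorem quadMap_sub_quadMap (a b c x y : R) :
    quadMap a b c x - quadMap a b c y = (x - y) * (b + c * (x + y)) := by
  unfold quadMap; ring

theorem quadMap_eq_self_iff {a b c x : R} :
    quadMap a b c x = x ↔ c * x ^ 2 + (b - 1) * x + a = 0 := by
  unfold quadMap
  constructor <;> intro h <;> linear_combination h

theorem mul_mul_eq_of_quadMap_eq_self [IsDomain R] {a b c x y : R} (hxy : x ≠ y)
    (hx : quadMap a b c x = x) (hy : quadMap a b c y = y) : c * (x * y) = a := by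
  unfold quadMap at hx hy
  have hsum : c * (x + y) + (b - 1) = 0 := by
    refine (mul_eq_zero.1 ?_).resolve_left (sub_ne_zero.2 hxy)
    linear_combination hx - hy
  linear_combination -hx + x * hsum

end CommRing

theorem quadIter_eq_iterate (A B C : ℂ) (n : ℕ) :
    quadIter A B C n = (quadMap A B C)^[n] 0 := by
  induction n with
  | zero => rfl
  | succ n ih => rw [Function.iterate_succ_apply', ← ih]; rfl

namespace Real

variable {a b c : ℝ}

def quadMapPrefixedPoints (a b c : ℝ) : Set ℝ := {r | 0 ≤ r ∧ quadMap a b c r ≤ r}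

variable (ha : 0 ≤ a) (hb : 0 ≤ b) (hc : 0 ≤ c)
include ha hb hc

theorem quadMap_nonneg {x : ℝ} (hx : 0 ≤ x) : 0 ≤ quadMap a b c x := by
  unfold quadMap; positivity

omit ha in
theorem quadMap_le_quadMap {x y : ℝ} (hx : 0 ≤ x) (hxy : x ≤ y) :
    quadMap a b c x ≤ quadMap a b c y := by
  unfold quadMap; gcongr

theorem iterate_quadMap_zero_nonneg (n : ℕ) : 0 ≤ (quadMap a b c)^[n] 0 := by
  induction n with
  | zero => rfl
  | succ n ih => rw [Function.iterate_succ_apply']; exact quadMap_nonneg ha hb hc ih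

theorem iterate_quadMap_zero_le {r : ℝ} (hr : r ∈ quadMapPrefixedPoints a b c) (n : ℕ) :
    (quadMap a b c)^[n] 0 ≤ r := by
  induction n with
  | zero => exact hr.1
  | succ n ih =>
    rw [Function.iterate_succ_apply']
    exact (quadMap_le_quadMap hb hc (iterate_quadMap_zero_nonneg ha hb hc n) ih).trans hr.2

theorem monotone_iterate_quadMap_zero : Monotone fun n => (quadMap a b c)^[n] 0 := by
  refine monotone_nat_of_le_succ fun n => ?_
  induction n with
  | zero => exact quadMap_nonneg ha hb hc le_rfl
  | succ n ih =>
    simp only [Function.iterate_succ_apply'] at ih ⊢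
    exact quadMap_le_quadMap hb hc (iterate_quadMap_zero_nonneg ha hb hc _) ih

theorem exists_tendsto_iterate_quadMap_zero {r : ℝ} (hr : r ∈ quadMapPrefixedPoints a b c) :
    ∃ s, Tendsto (fun n => (quadMap a b c)^[n] 0) atTop (𝓝 s) ∧
      IsLeast (quadMapPrefixedPoints a b c) s := by
  have hbdd : BddAbove (Set.range fun n => (quadMap a b c)^[n] 0) :=
    ⟨r, Set.forall_mem_range.2 (iterate_quadMap_zero_le ha hb hc hr)⟩
  have hlim := tendsto_atTop_ciSup (monotone_iterate_quadMap_zero ha hb hc) hbdd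
  have hfix := isFixedPt_of_tendsto_iterate hlim (continuous_quadMap a b c).continuousAt
  refine ⟨_, hlim, ⟨?_, hfix.le⟩, fun r' hr' => ciSup_le (iterate_quadMap_zero_le ha hb hc hr')⟩
  exact (iterate_quadMap_zero_nonneg ha hb hc 0).trans (le_ciSup hbdd 0)

theorem quadMap_eq_of_isLeast {s : ℝ} (hs : IsLeast (quadMapPrefixedPoints a b c) s) :
    quadMap a b c s = s := by
  have hps : 0 ≤ quadMap a b c s := quadMap_nonneg ha hb hc hs.1.1
  exact le_antisymm hs.1.2 (hs.2 ⟨hps, quadMap_le_quadMap hb hc hps hs.1.2⟩)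

omit ha hb hc in
theorem quadMap_div_eq_of_quadMap_eq {s : ℝ} (hc : c ≠ 0) (hs0 : s ≠ 0)
    (hs : quadMap a b c s = s) : quadMap a b c (a / (c * s)) = a / (c * s) := by
  rw [quadMap_eq_self_iff] at hs ⊢
  field_simp
  linear_combination a * hs

/-- By Vieta the other root of `c x² + (b - 1) x + a` is `a / (c s)`, and minimality puts it
above `s`. -/
theorem mul_sq_le_of_isLeast {s : ℝ} (hs : IsLeast (quadMapPrefixedPoints a b c) s) :
    c * s ^ 2 ≤ a := by
  by_contra! hlt
  have hpos : 0 < c * s ^ 2 := ha.trans_lt hlt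
  have hc0 : 0 < c := pos_of_mul_pos_left hpos (sq_nonneg s)
  have hs0 : 0 < s := hs.1.1.lt_of_ne (by rintro rfl; simp at hpos)
  have hcs : 0 < c * s := mul_pos hc0 hs0
  have hr : a / (c * s) ∈ quadMapPrefixedPoints a b c :=
    ⟨by positivity, (quadMap_div_eq_of_quadMap_eq hc0.ne' hs0.ne'
      (quadMap_eq_of_isLeast ha hb hc hs)).le⟩
  have hsr := hs.2 hr
  rw [le_div_iff₀ hcs] at hsr
  nlinarith

end Real

variable {𝕜 : Type*} [NormedField 𝕜]

theorem norm_quadMap_le (A B C : 𝕜) {z : 𝕜} {x : ℝ} (hz : ‖z‖ ≤ x) :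
    ‖quadMap A B C z‖ ≤ quadMap ‖A‖ ‖B‖ ‖C‖ x := by
  have hx : 0 ≤ x := (norm_nonneg z).trans hz
  calc ‖quadMap A B C z‖ ≤ ‖A‖ + ‖B * z‖ + ‖C * z ^ 2‖ := norm_add₃_le
    _ = ‖A‖ + ‖B‖ * ‖z‖ + ‖C‖ * ‖z‖ ^ 2 := by rw [norm_mul, norm_mul, norm_pow]
    _ ≤ quadMap ‖A‖ ‖B‖ ‖C‖ x := by unfold quadMap; gcongr

theorem norm_quadMap_sub_quadMap_le (A B C : 𝕜) {z w : 𝕜} {x y : ℝ} (hz : ‖z‖ ≤ x)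
    (hw : ‖w‖ ≤ y) (hzw : ‖z - w‖ ≤ x - y) :
    ‖quadMap A B C z - quadMap A B C w‖ ≤ quadMap ‖A‖ ‖B‖ ‖C‖ x - quadMap ‖A‖ ‖B‖ ‖C‖ y := by
  rw [quadMap_sub_quadMap, quadMap_sub_quadMap, norm_mul]
  refine mul_le_mul hzw ?_ (norm_nonneg _) ((norm_nonneg _).trans hzw)
  calc ‖B + C * (z + w)‖ ≤ ‖B‖ + ‖C‖ * (‖z‖ + ‖w‖) :=
        (norm_add_le _ _).trans (by rw [norm_mul]; gcongr; exact norm_add_le _ _)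
    _ ≤ ‖B‖ + ‖C‖ * (x + y) := by gcongr

theorem norm_iterate_quadMap_zero_le (A B C : 𝕜) (n : ℕ) :
    ‖(quadMap A B C)^[n] 0‖ ≤ (quadMap ‖A‖ ‖B‖ ‖C‖)^[n] 0 := by
  induction n with
  | zero => simp
  | succ n ih => simp only [Function.iterate_succ_apply']; exact norm_quadMap_le A B C ih

theorem norm_iterate_quadMap_zero_succ_sub_le (A B C : 𝕜) (n : ℕ) :
    ‖(quadMap A B C)^[n + 1] 0 - (quadMap A B C)^[n] 0‖ ≤
      (quadMap ‖A‖ ‖B‖ ‖C‖)^[n + 1] 0 - (quadMap ‖A‖ ‖B‖ ‖C‖)^[n] 0 := by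
  induction n with
  | zero => simpa using norm_quadMap_le A B C (z := 0) (x := 0) (by simp)
  | succ n ih =>
    simpa only [← Function.iterate_succ_apply'] using
      norm_quadMap_sub_quadMap_le A B C (norm_iterate_quadMap_zero_le A B C (n + 1))
        (norm_iterate_quadMap_zero_le A B C n) ih

theorem norm_le_norm_of_quadMap_eq_self {A B C θ μ : 𝕜} {s : ℝ}
    (hs : IsLeast (Real.quadMapPrefixedPoints ‖A‖ ‖B‖ ‖C‖) s) (hθs : ‖θ‖ ≤ s)
    (hθ : quadMap A B C θ = θ) (hμ : quadMap A B C μ = μ) : ‖θ‖ ≤ ‖μ‖ := by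
  obtain rfl | hne := eq_or_ne θ μ
  · rfl
  have hvieta := congrArg norm (mul_mul_eq_of_quadMap_eq_self hne hθ hμ)
  rw [norm_mul, norm_mul] at hvieta
  obtain hC | hC := eq_or_ne C 0
  · have hs0 : s ≤ 0 := hs.2 ⟨le_rfl, by simp [quadMap, ← hvieta, hC]⟩
    exact (hθs.trans hs0).trans (norm_nonneg μ)
  have hsq := Real.mul_sq_le_of_isLeast (norm_nonneg A) (norm_nonneg B) (norm_nonneg C) hs
  have hθθ : ‖C‖ * (‖θ‖ * ‖θ‖) ≤ ‖C‖ * (‖θ‖ * ‖μ‖) :=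
    calc ‖C‖ * (‖θ‖ * ‖θ‖) ≤ ‖C‖ * s ^ 2 := by rw [← sq]; gcongr
      _ ≤ ‖A‖ := hsq
      _ = ‖C‖ * (‖θ‖ * ‖μ‖) := hvieta.symm
  have := le_of_mul_le_mul_left hθθ (norm_pos_iff.2 hC)
  nlinarith [norm_nonneg θ, norm_nonneg μ]

theorem exists_tendsto_iterate_quadMap_of_mem_quadMapPrefixedPoints [CompleteSpace 𝕜]
    (A B C : 𝕜) {r : ℝ} (hr : r ∈ Real.quadMapPrefixedPoints ‖A‖ ‖B‖ ‖C‖) :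
    ∃ θ, Tendsto (fun n => (quadMap A B C)^[n] 0) atTop (𝓝 θ) ∧ quadMap A B C θ = θ ∧
      ∀ μ, quadMap A B C μ = μ → ‖θ‖ ≤ ‖μ‖ := by
  have ha := norm_nonneg A
  have hb := norm_nonneg B
  have hc := norm_nonneg C
  set t := fun n => (quadMap ‖A‖ ‖B‖ ‖C‖)^[n] 0
  obtain ⟨s, hts, hs⟩ := Real.exists_tendsto_iterate_quadMap_zero ha hb hc hr
  have hsummable : Summable fun n => t (n + 1) - t n := by
    refine summable_of_sum_range_le (c := s)
      (fun n => sub_nonneg.2 (Real.monotone_iterate_quadMap_zero ha hb hc n.le_succ))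
      (fun n => ?_)
    rw [Finset.sum_range_sub t]
    linarith [Real.iterate_quadMap_zero_le ha hb hc hs.1 n,
      Real.iterate_quadMap_zero_nonneg ha hb hc 0]
  have hcauchy : CauchySeq fun n => (quadMap A B C)^[n] 0 := by
    refine cauchySeq_of_dist_le_of_summable _ (fun n => ?_) hsummable
    rw [dist_comm, dist_eq_norm]
    exact norm_iterate_quadMap_zero_succ_sub_le A B C n
  obtain ⟨θ, hθ⟩ := cauchySeq_tendsto_of_complete hcauchy
  have hfix : quadMap A B C θ = θ :=
    isFixedPt_of_tendsto_iterate hθ (continuous_quadMap A B C).continuousAt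
  have hθs : ‖θ‖ ≤ s := le_of_tendsto_of_tendsto' hθ.norm hts (norm_iterate_quadMap_zero_le A B C)
  exact ⟨θ, hθ, hfix, fun μ hμ => norm_le_norm_of_quadMap_eq_self hs hθs hfix hμ⟩

theorem norm_symb_le (v : Fin 3 → Fin 3 → ℝ) (hnn : ∀ i j, 0 ≤ v i j) (i : Fin 3) {ζ : ℂ}
    (hζ : ‖ζ‖ = 1) : ‖symb v i ζ‖ ≤ symbOne v i :=
  calc ‖symb v i ζ‖ ≤ ‖(v i 0 : ℂ) * ζ⁻¹‖ + ‖(v i 1 : ℂ)‖ + ‖(v i 2 : ℂ) * ζ‖ := norm_add₃_le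
    _ = symbOne v i := by simp [hζ, abs_of_nonneg, hnn, symbOne]

theorem stmt17 (v : Fin 3 → Fin 3 → ℝ) (hnn : ∀ i j, 0 ≤ v i j)
    (hsum : ∑ i, ∑ j, v i j = 1)
    (ζ : ℂ) (hζ : ‖ζ‖ = 1) :
    ∃ θ : ℂ,
      Tendsto (quadIter (symb v 0 ζ) (symb v 1 ζ) (symb v 2 ζ)) atTop (𝓝 θ) ∧
      symb v 2 ζ * θ ^ 2 + (symb v 1 ζ - 1) * θ + symb v 0 ζ = 0 ∧
      ∀ μ : ℂ, symb v 2 ζ * μ ^ 2 + (symb v 1 ζ - 1) * μ + symb v 0 ζ = 0 →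
        ‖θ‖ ≤ ‖μ‖ := by
  have hone : (1 : ℝ) ∈ Real.quadMapPrefixedPoints ‖symb v 0 ζ‖ ‖symb v 1 ζ‖ ‖symb v 2 ζ‖ := by
    have hsymbOne : symbOne v 0 + symbOne v 1 + symbOne v 2 = 1 := by
      simpa only [Fin.sum_univ_three, symbOne, add_assoc] using hsum
    refine ⟨zero_le_one, ?_⟩
    unfold quadMap
    linarith [norm_symb_le v hnn 0 hζ, norm_symb_le v hnn 1 hζ, norm_symb_le v hnn 2 hζ]
  obtain ⟨θ, hlim, hθ, hmin⟩ :=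
    exists_tendsto_iterate_quadMap_of_mem_quadMapPrefixedPoints _ _ _ hone
  refine ⟨θ, ?_, quadMap_eq_self_iff.1 hθ, fun μ hμ => hmin μ (quadMap_eq_self_iff.2 hμ)⟩
  simpa only [funext (quadIter_eq_iterate _ _ _)] using hlim
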